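/- Let n ≥ 2 and equip ℝⁿ with the Euclidean metric; write |·| for the 1/5-volume. For every family 𝒮 of subsets of ℝⁿ that coarsely separates ℝⁿ, there exist constants c > 0 and r₁ ≥ 0 such that V_𝒮(r) ≥ c·r^{n−1} for every r ≥ r₁; that is, every coarsely separating family of subsets of ℝⁿ has growth at least r^{n−1}. -/

import Mathlib

open Metric Set Filter

/-- The `α`-neighbourhood `A^{+α}` of a subset `A` of a metric space. -/
def thickSet {X : Type*} [PseudoMetricSpace X] (A : Set X) (α : ℝ) : Set X :=
  {x | ∃ a ∈ A, dist x a ≤ α}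

/-- `c 0, …, c n` is a `k`-path (of length `n`) in `Y`. -/
def IsKPath {X : Type*} [PseudoMetricSpace X] (k : ℝ) (Y : Set X) (c : ℕ → X) (n : ℕ) : Prop :=
  (∀ i ≤ n, c i ∈ Y) ∧ ∀ i < n, dist (c i) (c (i + 1)) ≤ k

/-- `a` and `b` are connected by a `k`-path in `Y`. -/
def KConn {X : Type*} [PseudoMetricSpace X] (k : ℝ) (Y : Set X) (a b : X) : Prop :=
  ∃ n : ℕ, ∃ c : ℕ → X, c 0 = a ∧ c n = b ∧ IsKPath k Y c n

/-- `Y` is `k`-coarsely connected. -/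
def KCoarselyConnected {X : Type*} [PseudoMetricSpace X] (k : ℝ) (Y : Set X) : Prop :=
  ∀ a ∈ Y, ∀ b ∈ Y, KConn k Y a b

/-- `C` is a `k`-coarsely connected component of `Y`, i.e. a maximal
`k`-coarsely connected subset of `Y`. -/
def IsKComponent {X : Type*} [PseudoMetricSpace X] (k : ℝ) (Y C : Set X) : Prop :=
  C ⊆ Y ∧ KCoarselyConnected k C ∧
    ∀ C' : Set X, C ⊆ C' → C' ⊆ Y → KCoarselyConnected k C' → C' = C

/-- `Y` is `k`-coarsely geodesic with control function `σ`. -/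
def KCoarselyGeodesicWith {X : Type*} [PseudoMetricSpace X] (k : ℝ) (σ : ℝ → ℝ) (Y : Set X) :
    Prop :=
  ∀ a ∈ Y, ∀ b ∈ Y, ∃ n : ℕ, ∃ c : ℕ → X,
    c 0 = a ∧ c n = b ∧ IsKPath k Y c n ∧ (n : ℝ) ≤ σ (dist a b)

/-- `Y` is `k`-coarsely geodesic. -/
def KCoarselyGeodesic {X : Type*} [PseudoMetricSpace X] (k : ℝ) (Y : Set X) : Prop :=
  ∃ σ : ℝ → ℝ, KCoarselyGeodesicWith k σ Y

/-- `Y` is coarsely geodesic. -/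
def CoarselyGeodesic {X : Type*} [PseudoMetricSpace X] (Y : Set X) : Prop :=
  ∃ k > (0 : ℝ), KCoarselyGeodesic k Y

/-- The collection `𝒵` of subsets of `X` coarsely separates the subset `Y`. -/
def CoarselySeparates {X : Type*} [PseudoMetricSpace X] (𝒵 : Set (Set X)) (Y : Set X) : Prop :=
  ∃ k > (0 : ℝ), ∃ L ≥ (0 : ℝ), KCoarselyConnected k Y ∧
    ∀ D ≥ (0 : ℝ), ∃ Z ∈ 𝒵, ∃ C₁ C₂ : Set X,
      IsKComponent k (Y \ thickSet Z L) C₁ ∧ IsKComponent k (Y \ thickSet Z L) C₂ ∧ C₁ ≠ C₂ ∧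
      (∃ p ∈ C₁, ∀ z ∈ Z, D ≤ dist p z) ∧ (∃ q ∈ C₂, ∀ z ∈ Z, D ≤ dist q z)

/-- `X` has bounded geometry at scale `s`: every ball of radius `r` can be covered by a
uniformly bounded number of closed balls of radius `s`. -/
def BddGeomAtScale (X : Type*) [PseudoMetricSpace X] (s : ℝ) : Prop :=
  ∀ r ≥ (0 : ℝ), ∃ n : ℕ, ∀ x : X, ∃ F : Finset X,
    F.card ≤ n ∧ Metric.closedBall x r ⊆ ⋃ c ∈ F, Metric.closedBall c s

/-- The `s`-volume of a subset `A`: the minimal number of closed balls of radius `s`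
needed to cover `A`. -/
noncomputable def svol {X : Type*} [PseudoMetricSpace X] (s : ℝ) (A : Set X) : ℕ :=
  sInf {n : ℕ | ∃ F : Finset X, F.card = n ∧ A ⊆ ⋃ c ∈ F, Metric.closedBall c s}


section aux
open AffineMap







section paths
variable {X : Type*} [PseudoMetricSpace X] {k : ℝ} {Y Y' : Set X} {a b x y : X}

lemma kconn_refl (h : a ∈ Y) : KConn k Y a a :=
  ⟨0, fun _ => a, rfl, rfl, fun i _ => h, fun i hi => absurd hi (Nat.not_lt_zero i)⟩

lemma kconn_mem_left (h : KConn k Y a b) : a ∈ Y := by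
  obtain ⟨n, c, h0, hn, hmem, _⟩ := h
  exact h0 ▸ hmem 0 (Nat.zero_le _)

lemma kconn_mem_right (h : KConn k Y a b) : b ∈ Y := by
  obtain ⟨n, c, h0, hn, hmem, _⟩ := h
  exact hn ▸ hmem n le_rfl

lemma kconn_mono (hY : Y ⊆ Y') (h : KConn k Y a b) : KConn k Y' a b := by
  obtain ⟨n, c, h0, hn, hmem, hd⟩ := h
  exact ⟨n, c, h0, hn, fun i hi => hY (hmem i hi), hd⟩

lemma kconn_symm (h : KConn k Y a b) : KConn k Y b a := by
  obtain ⟨n, c, h0, hn, hmem, hd⟩ := h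
  refine ⟨n, fun i => c (n - i), by simp [hn], by simp [h0], fun i hi => hmem _ (Nat.sub_le _ _), ?_⟩
  intro i hi
  have h1 : n - i = (n - (i+1)) + 1 := by omega
  simp only []
  rw [dist_comm, h1]
  exact hd _ (by omega)

lemma kconn_trans (h1 : KConn k Y a b) (h2 : KConn k Y b x) : KConn k Y a x := by
  obtain ⟨n, c, h0, hn, hmem, hd⟩ := h1
  obtain ⟨n', c', h0', hn', hmem', hd'⟩ := h2
  refine ⟨n + n', fun i => if i ≤ n then c i else c' (i - n), by simp [h0], ?_, ?_, ?_⟩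
  · by_cases h : n' = 0
    · subst h; simp only [Nat.add_zero, if_pos le_rfl, hn]; rw [← hn', ← h0']
    · simp only [if_neg (by omega : ¬ n + n' ≤ n)]
      simpa using hn'
  · intro i hi
    by_cases h : i ≤ n
    · simpa [h] using hmem i h
    · simp only [if_neg h]
      exact hmem' _ (by omega)
  · intro i hi
    by_cases h : i + 1 ≤ n
    · simp only [if_pos (by omega : i ≤ n), if_pos h]
      exact hd i (by omega)
    · by_cases h' : i ≤ n
      · have : i = n := by omega
        subst this
        simp only [if_pos le_rfl, if_neg h]
        have : i + 1 - i = 1 := by omega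
        rw [this, hn, ← h0']
        exact hd' 0 (by omega)
      · simp only [if_neg h', if_neg h]
        have : i + 1 - n = (i - n) + 1 := by omega
        rw [this]
        exact hd' _ (by omega)

lemma kconn_extend (h : KConn k Y a b) (hy : y ∈ Y) (hd : dist b y ≤ k) : KConn k Y a y := by
  refine kconn_trans h ⟨1, fun i => if i = 0 then b else y, by simp, by simp, ?_, ?_⟩
  · intro i hi
    by_cases h0 : i = 0
    · simpa [h0] using kconn_mem_right h
    · simp [h0, hy]
  · intro i hi
    interval_cases i
    simpa using hd

end paths





section seg
variable {E : Type*} [NormedAddCommGroup E] [NormedSpace ℝ E] {k : ℝ} {Y : Set E} {x y : E}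

lemma min_one_lipschitz (a b : ℝ) : |min 1 a - min 1 b| ≤ |a - b| := by
  rcases le_total 1 a with h1 | h1 <;> rcases le_total 1 b with h2 | h2 <;>
    simp only [min_eq_left, min_eq_right, h1, h2, abs_sub_le_iff] <;>
    constructor <;> cases' abs_sub_le_iff.mp (le_refl |a - b|) with p q <;> nlinarith [abs_nonneg (a-b)]

lemma seg_conn (hk : 0 < k)
    (h : ∀ t ∈ Icc (0:ℝ) 1, (AffineMap.lineMap x y t : E) ∈ Y) : KConn k Y x y := by
  set m : ℕ := ⌈dist x y / k⌉₊ + 1 with hm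
  have hmpos : 0 < m := Nat.succ_pos _
  have hdm : dist x y / (m:ℝ) ≤ k := by
    rw [div_le_iff₀ (by positivity)]
    have h1 : dist x y / k ≤ (m:ℝ) := le_trans (Nat.le_ceil _) (by exact_mod_cast Nat.le_succ _)
    calc dist x y = (dist x y / k) * k := by field_simp
    _ ≤ (m:ℝ) * k := by nlinarith
    _ = k * m := mul_comm _ _
  refine ⟨m, fun i => lineMap x y (min 1 ((i:ℝ)/(m:ℝ))), by simp, ?_, ?_, ?_⟩
  · have : min 1 ((m:ℝ)/(m:ℝ)) = 1 := by
      rw [div_self (by positivity : (m:ℝ) ≠ 0)]; simp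
    simp only [this, lineMap_apply_one]
  · intro i _
    exact h _ ⟨le_min zero_le_one (by positivity), min_le_left _ _⟩
  · intro i hi
    simp only []
    rw [dist_lineMap_lineMap]
    calc |min 1 ((i:ℝ)/m) - min 1 (((i+1:ℕ):ℝ)/m)| * dist x y
        ≤ |((i:ℝ)/m) - (((i+1:ℕ):ℝ)/m)| * dist x y :=
          mul_le_mul_of_nonneg_right (min_one_lipschitz _ _) dist_nonneg
      _ = dist x y / m := by
          push_cast
          rw [div_sub_div_same, show (i:ℝ) - ((i:ℝ)+1) = -1 by ring, abs_div]
          rw [abs_neg, abs_one, abs_of_pos (by positivity)]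
          ring
      _ ≤ k := hdm

end seg



variable {n m : ℕ}

/-- indicator -/
def ind (P : Prop) [Decidable P] : ℕ := if P then 1 else 0

section comb
variable (F : (Fin n → Fin m) → Bool)

/-- number of `v` with coordinate `i` fixed -/
lemma card_coord_fiber (hn : 0 < n) (i : Fin n) (b : Fin m) :
    (Finset.univ.filter (fun v : Fin n → Fin m => v i = b)).card = m ^ (n - 1) := by
  have e : {v : Fin n → Fin m // v i = b} ≃ ({j : Fin n // j ≠ i} → Fin m) := by
    refine ⟨fun v j => v.1 j.1, fun f => ⟨fun j => if h : j = i then b else f ⟨j, h⟩, by simp⟩, ?_, ?_⟩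
    · rintro ⟨v, hv⟩
      ext j
      by_cases h : j = i
      · subst h; simp [hv]
      · simp [h]
    · intro f; ext j; simp [j.2]
  have := Fintype.card_congr e
  rw [Fintype.card_subtype] at this
  rw [this, Fintype.card_fun, Fintype.card_fin]
  congr 1
  rw [Fintype.card_subtype]
  have : (Finset.univ.filter (fun j : Fin n => j ≠ i)).card = n - 1 := by
    rw [Finset.filter_ne', Finset.card_erase_of_mem (Finset.mem_univ _)]
    simp
  rw [this]

/-- sum over w of a function of one coordinate -/
lemma sum_coord (hn : 0 < n) (i : Fin n) (g : Fin m → ℕ) :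
    ∑ w : Fin n → Fin m, g (w i) = m ^ (n - 1) * ∑ b : Fin m, g b := by
  classical
  rw [← Finset.sum_fiberwise_of_maps_to (g := fun w : Fin n → Fin m => w i)
    (fun w _ => Finset.mem_univ (w i))]
  rw [Finset.mul_sum]
  refine Finset.sum_congr rfl fun b _ => ?_
  rw [Finset.sum_congr rfl (fun w hw => by rw [(Finset.mem_filter.mp hw).2]), Finset.sum_const,
    card_coord_fiber hn i b, smul_eq_mul]

end comb

section main
variable (F : (Fin n → Fin m) → Bool)

def Mixed (F : (Fin n → Fin m) → Bool) (i : Fin n) (v : Fin n → Fin m) : Prop :=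
  ∃ a b : Fin m, F (Function.update v i a) ≠ F (Function.update v i b)

instance (i : Fin n) (v : Fin n → Fin m) : Decidable (Mixed F i v) := by
  unfold Mixed; infer_instance

/-- the hybrid point -/
def hyb (j : ℕ) (v w : Fin n → Fin m) : Fin n → Fin m :=
  fun i => if i.val < j then w i else v i

lemma hyb_zero (v w : Fin n → Fin m) : hyb 0 v w = v := by
  funext i; simp [hyb]

lemma hyb_top (v w : Fin n → Fin m) : hyb n v w = w := by
  funext i; simp [hyb, i.2]

lemma telescope (v w : Fin n → Fin m) :
    ind (F v ≠ F w) ≤ ∑ j ∈ Finset.range n, ind (F (hyb j v w) ≠ F (hyb (j+1) v w)) := by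
  by_cases h : F v = F w
  · simp [ind, h]
  · have : ∃ j ∈ Finset.range n, F (hyb j v w) ≠ F (hyb (j+1) v w) := by
      by_contra hc
      push_neg at hc
      apply h
      have key : ∀ j ≤ n, F (hyb j v w) = F v := by
        intro j hj
        induction j with
        | zero => rw [hyb_zero]
        | succ j ih =>
          rw [← hc j (Finset.mem_range.mpr (by omega)), ih (by omega)]
      rw [← hyb_top v w, key n le_rfl]
    obtain ⟨j, hj, hne⟩ := this
    calc ind (F v ≠ F w) ≤ 1 := by simp [ind]; split <;> omega
    _ ≤ _ := Finset.single_le_sum (f := fun j => ind (F (hyb j v w) ≠ F (hyb (j+1) v w)))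
        (fun _ _ => Nat.zero_le _) hj |>.trans_eq' (by simp [ind, hne])

/-- reindexing by the splice involution -/
lemma sum_hyb (hn : 0 < n) (j : ℕ) (hj : j < n) :
    ∑ p : (Fin n → Fin m) × (Fin n → Fin m), ind (F (hyb j p.1 p.2) ≠ F (hyb (j+1) p.1 p.2))
      = m ^ (n-1) * ∑ v : Fin n → Fin m, ∑ b : Fin m,
          ind (F v ≠ F (Function.update v ⟨j, hj⟩ b)) := by
  classical
  set Φ : (Fin n → Fin m) × (Fin n → Fin m) → (Fin n → Fin m) × (Fin n → Fin m) :=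
    fun p => (fun i => if i.val < j then p.2 i else p.1 i,
              fun i => if i.val < j then p.1 i else p.2 i) with hΦ
  have hinv : Function.Involutive Φ := by
    intro p
    simp only [hΦ]
    ext i <;> by_cases h : i.val < j <;> simp [h]
  have key : ∀ p : (Fin n → Fin m) × (Fin n → Fin m),
      ind (F (hyb j (Φ p).1 (Φ p).2) ≠ F (hyb (j+1) (Φ p).1 (Φ p).2))
      = ind (F p.1 ≠ F (Function.update p.1 ⟨j, hj⟩ (p.2 ⟨j, hj⟩))) := by
    intro p
    have e1 : hyb j (Φ p).1 (Φ p).2 = p.1 := by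
      funext i; simp only [hyb, hΦ]; by_cases h : i.val < j <;> simp [h]
    have e2 : hyb (j+1) (Φ p).1 (Φ p).2 = Function.update p.1 ⟨j, hj⟩ (p.2 ⟨j, hj⟩) := by
      funext i
      simp only [hyb, hΦ]
      rcases lt_trichotomy i.val j with h | h | h
      · rw [if_pos (by omega), if_pos h, Function.update_of_ne (by simp [Fin.ext_iff]; omega)]
      · have : i = ⟨j, hj⟩ := Fin.ext h
        subst this
        rw [if_pos (by omega), if_neg (by omega), Function.update_self]
      · rw [if_neg (by omega), if_neg (by omega),
          Function.update_of_ne (by simp [Fin.ext_iff]; omega)]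
    rw [e1, e2]
  calc ∑ p : (Fin n → Fin m) × (Fin n → Fin m),
        ind (F (hyb j p.1 p.2) ≠ F (hyb (j+1) p.1 p.2))
      = ∑ p : (Fin n → Fin m) × (Fin n → Fin m),
          ind (F p.1 ≠ F (Function.update p.1 ⟨j, hj⟩ (p.2 ⟨j, hj⟩))) :=
        (Fintype.sum_bijective Φ hinv.bijective _ _ (fun p => (key p).symm)).symm
    _ = ∑ v : Fin n → Fin m, ∑ w : Fin n → Fin m,
          ind (F v ≠ F (Function.update v ⟨j, hj⟩ (w ⟨j, hj⟩))) := by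
        rw [Fintype.sum_prod_type]
    _ = ∑ v : Fin n → Fin m, m ^ (n-1) * ∑ b : Fin m,
          ind (F v ≠ F (Function.update v ⟨j, hj⟩ b)) :=
        Finset.sum_congr rfl (fun v _ => sum_coord hn ⟨j, hj⟩ (fun b => ind (F v ≠ F (Function.update v ⟨j, hj⟩ b))))
    _ = _ := by rw [← Finset.mul_sum]

end main

section main2
variable (F : (Fin n → Fin m) → Bool)

lemma ind_mono {P Q : Prop} [Decidable P] [Decidable Q] (h : P → Q) : ind P ≤ ind Q := by
  simp only [ind]
  split
  · simp [h ‹P›]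
  · exact Nat.zero_le _

lemma ind_le_one {P : Prop} [Decidable P] : ind P ≤ 1 := by
  simp only [ind]; split <;> omega

lemma E_le (i : Fin n) :
    ∑ v : Fin n → Fin m, ∑ b : Fin m, ind (F v ≠ F (Function.update v i b))
      ≤ m * (Finset.univ.filter (fun v => Mixed F i v)).card := by
  classical
  calc ∑ v : Fin n → Fin m, ∑ b : Fin m, ind (F v ≠ F (Function.update v i b))
      ≤ ∑ v : Fin n → Fin m, ∑ _b : Fin m, ind (Mixed F i v) := by
        refine Finset.sum_le_sum fun v _ => Finset.sum_le_sum fun b _ => ind_mono fun h => ?_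
        exact ⟨v i, b, by rwa [Function.update_eq_self]⟩
    _ = m * ∑ v : Fin n → Fin m, ind (Mixed F i v) := by
        simp [Finset.sum_const, mul_comm, Finset.mul_sum]
    _ = m * (Finset.univ.filter (fun v => Mixed F i v)).card := by
        rw [Finset.card_filter]
        simp [ind]

lemma mixed_card_le (hm : 0 < m) (i : Fin n) :
    (Finset.univ.filter (fun v => Mixed F i v)).card
      ≤ m * (Finset.univ.filter (fun v => v i = (⟨0, hm⟩ : Fin m) ∧ Mixed F i v)).card := by
  classical
  set s := Finset.univ.filter (fun v => Mixed F i v) with hs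
  set f : (Fin n → Fin m) → (Fin n → Fin m) := fun v => Function.update v i ⟨0, hm⟩ with hf
  have himg : s.image f ⊆ Finset.univ.filter (fun v => v i = (⟨0, hm⟩ : Fin m) ∧ Mixed F i v) := by
    intro b hb
    obtain ⟨v, hv, rfl⟩ := Finset.mem_image.mp hb
    rw [Finset.mem_filter] at hv ⊢
    refine ⟨Finset.mem_univ _, by simp [hf], ?_⟩
    obtain ⟨a, b', hab⟩ := hv.2
    exact ⟨a, b', by simpa [hf, Function.update_idem] using hab⟩
  have hcard : s.card ≤ m * (s.image f).card := by
    apply Finset.card_le_mul_card_image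
    intro b _
    have : (s.filter (fun a => f a = b)) ⊆ (s.filter (fun a => f a = b)) := le_refl _
    refine le_trans (Finset.card_le_card_of_injOn (fun v => v i) (fun _ _ => Finset.mem_univ _) ?_)
      (by simp : (Finset.univ : Finset (Fin m)).card ≤ m)
    intro v hv v' hv' hvv
    rw [Finset.mem_coe, Finset.mem_filter] at hv hv'
    have h1 : f v = f v' := hv.2.trans hv'.2.symm
    funext j
    by_cases hj : j = i
    · subst hj; exact hvv
    · have := congrFun h1 j
      simpa [hf, Function.update_of_ne hj] using this
  exact le_trans hcard (Nat.mul_le_mul_left m (Finset.card_le_card himg))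

theorem comb_main (hn : 0 < n) (hm : 0 < m)
    (h1 : m ^ n ≤ 3 * (Finset.univ.filter (fun v => F v = true)).card)
    (h2 : 3 * (Finset.univ.filter (fun v => F v = true)).card ≤ 2 * m ^ n) :
    ∃ i : Fin n, m ^ (2*n) ≤
      9 * n * m ^ (n+1) *
        (Finset.univ.filter (fun v => v i = (⟨0, hm⟩ : Fin m) ∧ Mixed F i v)).card := by
  classical
  set S := (Finset.univ.filter (fun v => F v = true)).card with hS
  have hcardG : Fintype.card (Fin n → Fin m) = m ^ n := by simp
  have hSle : S ≤ m ^ n := by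
    rw [← hcardG]; exact le_trans (Finset.card_filter_le _ _) (by simp [Finset.card_univ])
  -- step 1
  have step1 : m ^ (2*n) ≤ 9 * (S * (m ^ n - S)) := by
    have hB : m ^ n ≤ 3 * (m ^ n - S) := by omega
    calc m ^ (2*n) = m ^ n * m ^ n := by rw [← pow_add]; ring_nf
    _ ≤ (3 * S) * (3 * (m ^ n - S)) := Nat.mul_le_mul h1 hB
    _ = 9 * (S * (m ^ n - S)) := by ring
  -- step 2 : S * (m^n - S) ≤ ∑ over pairs
  have step2 : S * (m ^ n - S) ≤
      ∑ p : (Fin n → Fin m) × (Fin n → Fin m), ind (F p.1 ≠ F p.2) := by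
    classical
    set S1 := Finset.univ.filter (fun v : Fin n → Fin m => F v = true) with hS1
    set S0 := Finset.univ.filter (fun v : Fin n → Fin m => ¬ (F v = true)) with hS0
    have hS1card : S1.card = S := rfl
    have hS0card : S0.card = m ^ n - S := by
      have h : S0 = Finset.univ \ S1 := Finset.filter_not _ _
      rw [h, Finset.card_sdiff_of_subset (Finset.subset_univ _), Finset.card_univ, hcardG, hS1card]
    have hsub : S1 ×ˢ S0 ⊆ Finset.univ := Finset.subset_univ _
    calc S * (m ^ n - S) = (S1 ×ˢ S0).card := by rw [Finset.card_product, hS0card, hS1card]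
    _ = ∑ p ∈ S1 ×ˢ S0, ind (F p.1 ≠ F p.2) := by
        rw [Finset.card_eq_sum_ones]
        refine Finset.sum_congr rfl fun p hp => ?_
        rw [Finset.mem_product] at hp
        have h1 : F p.1 = true := (Finset.mem_filter.mp hp.1).2
        have h0 : ¬ (F p.2 = true) := (Finset.mem_filter.mp hp.2).2
        simp [ind, h1, h0]
    _ ≤ _ := Finset.sum_le_sum_of_subset hsub
  -- step 3 : telescope and reindex
  have step3 : ∑ p : (Fin n → Fin m) × (Fin n → Fin m), ind (F p.1 ≠ F p.2)
      ≤ ∑ i : Fin n, m ^ (n-1) * ∑ v : Fin n → Fin m, ∑ b : Fin m,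
            ind (F v ≠ F (Function.update v i b)) := by
    calc ∑ p : (Fin n → Fin m) × (Fin n → Fin m), ind (F p.1 ≠ F p.2)
        ≤ ∑ p : (Fin n → Fin m) × (Fin n → Fin m), ∑ j ∈ Finset.range n,
            ind (F (hyb j p.1 p.2) ≠ F (hyb (j+1) p.1 p.2)) :=
          Finset.sum_le_sum fun p _ => telescope F p.1 p.2
      _ = ∑ j ∈ Finset.range n, ∑ p : (Fin n → Fin m) × (Fin n → Fin m),
            ind (F (hyb j p.1 p.2) ≠ F (hyb (j+1) p.1 p.2)) := Finset.sum_comm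
      _ = ∑ i : Fin n, ∑ p : (Fin n → Fin m) × (Fin n → Fin m),
            ind (F (hyb i.val p.1 p.2) ≠ F (hyb (i.val+1) p.1 p.2)) :=
          (Fin.sum_univ_eq_sum_range _ n).symm
      _ = ∑ i : Fin n, m ^ (n-1) * ∑ v : Fin n → Fin m, ∑ b : Fin m,
            ind (F v ≠ F (Function.update v i b)) := by
          refine Finset.sum_congr rfl fun i _ => ?_
          have := sum_hyb F hn i.val i.isLt
          simpa using this
  -- step 4 : bound each term and take max
  set cardf : Fin n → ℕ := fun i =>
    (Finset.univ.filter (fun v => v i = (⟨0, hm⟩ : Fin m) ∧ Mixed F i v)).card with hcardf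
  have step4 : ∀ i : Fin n, m ^ (n-1) * ∑ v : Fin n → Fin m, ∑ b : Fin m,
      ind (F v ≠ F (Function.update v i b)) ≤ m ^ (n+1) * cardf i := by
    intro i
    calc m ^ (n-1) * ∑ v : Fin n → Fin m, ∑ b : Fin m,
          ind (F v ≠ F (Function.update v i b))
        ≤ m ^ (n-1) * (m * (m * cardf i)) := by
          refine Nat.mul_le_mul_left _ (le_trans (E_le F i) (Nat.mul_le_mul_left _ ?_))
          exact mixed_card_le F hm i
      _ = m ^ (n-1) * m ^ 2 * cardf i := by ring
      _ = m ^ (n+1) * cardf i := by rw [← pow_add]; congr 2; omega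
  obtain ⟨i0, _, hmax⟩ := Finset.exists_max_image (Finset.univ : Finset (Fin n)) cardf
    ⟨⟨0, hn⟩, Finset.mem_univ _⟩
  refine ⟨i0, ?_⟩
  have step5 : ∑ i : Fin n, m ^ (n-1) * ∑ v : Fin n → Fin m, ∑ b : Fin m,
      ind (F v ≠ F (Function.update v i b)) ≤ n * (m ^ (n+1) * cardf i0) := by
    calc ∑ i : Fin n, m ^ (n-1) * ∑ v : Fin n → Fin m, ∑ b : Fin m,
          ind (F v ≠ F (Function.update v i b))
        ≤ ∑ _i : Fin n, m ^ (n+1) * cardf i0 := by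
          refine Finset.sum_le_sum fun i _ => le_trans (step4 i) ?_
          exact Nat.mul_le_mul_left _ (hmax i (Finset.mem_univ i))
      _ = n * (m ^ (n+1) * cardf i0) := by
          rw [Finset.sum_const, Finset.card_univ, Fintype.card_fin, smul_eq_mul]
  calc m ^ (2*n) ≤ 9 * (S * (m ^ n - S)) := step1
    _ ≤ 9 * (n * (m ^ (n+1) * cardf i0)) :=
        Nat.mul_le_mul_left _ (le_trans step2 (le_trans step3 step5))
    _ = 9 * n * m ^ (n+1) * cardf i0 := by ring

end main2

end aux

section cube
variable {n m : ℕ}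

/-- the point of the lattice cube with base `z` and offset `g` -/
def cpt (z : Fin n → ℤ) (g : Fin n → Fin m) : Fin n → ℝ := fun i => (z i : ℝ) + (g i : ℕ)

variable (P : (Fin n → ℝ) → Prop) [DecidablePred P]

/-- the number of cube points satisfying `P` -/
def Nc (m : ℕ) (z : Fin n → ℤ) : ℕ :=
  (Finset.univ.filter (fun g : Fin n → Fin m => P (cpt z g))).card

lemma Nc_le_univ (z : Fin n → ℤ) : Nc P m z ≤ m ^ n := by
  unfold Nc
  refine le_trans (Finset.card_filter_le _ _) ?_
  simp [Finset.card_univ]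

lemma Nc_le_step (hn : 0 < n) (hm : 0 < m) (z : Fin n → ℤ) (i : Fin n) (d : ℤ)
    (hd : d = 1 ∨ d = -1) :
    Nc P m z ≤ Nc P m (Function.update z i (z i + d)) + m ^ (n-1) := by
  classical
  set z' := Function.update z i (z i + d) with hz'
  set bad : Fin m := if d = 1 then ⟨0, hm⟩ else ⟨m-1, by omega⟩ with hbad
  set nv : Fin m → ℕ := fun a => if d = 1 then a.val - 1 else a.val + 1 with hnv
  set f : (Fin n → Fin m) → (Fin n → Fin m) :=
    fun g => Function.update g i ⟨nv (g i) % m, Nat.mod_lt _ hm⟩ with hf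
  have hnv_lt : ∀ a : Fin m, a ≠ bad → nv a < m := by
    intro a ha
    have hval : a.val ≠ bad.val := fun h => ha (Fin.ext h)
    rcases hd with h1 | h1 <;> simp [hnv, hbad, h1] at hval ⊢ <;> omega
  have key : ∀ g : Fin n → Fin m, g i ≠ bad → cpt z' (f g) = cpt z g := by
    intro g hg
    funext j
    by_cases hj : j = i
    · subst hj
      have hlt := hnv_lt _ hg
      have hval : (g j).val ≠ bad.val := fun h => hg (Fin.ext h)
      simp only [cpt, hf, Function.update_self, hz']
      rw [Nat.mod_eq_of_lt hlt]
      rcases hd with h1 | h1 <;> simp only [hnv, hbad, h1] at hval ⊢ <;>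
        [skip; skip] <;> push_cast [h1] <;> simp at hval ⊢
      · rw [Nat.cast_sub (by omega : 1 ≤ (g j).val)]; push_cast; ring
      · push_cast; ring
    · simp [cpt, hf, Function.update_of_ne hj, hz']
  have hsub : (Finset.univ.filter (fun g : Fin n → Fin m => P (cpt z g)))
      ⊆ (Finset.univ.filter (fun g : Fin n → Fin m => P (cpt z g) ∧ g i ≠ bad))
        ∪ (Finset.univ.filter (fun g : Fin n → Fin m => g i = bad)) := by
    intro g hg
    rw [Finset.mem_filter] at hg
    by_cases h : g i = bad
    · exact Finset.mem_union_right _ (Finset.mem_filter.mpr ⟨Finset.mem_univ _, h⟩)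
    · exact Finset.mem_union_left _ (Finset.mem_filter.mpr ⟨Finset.mem_univ _, hg.2, h⟩)
  have hinj : (Finset.univ.filter (fun g : Fin n → Fin m => P (cpt z g) ∧ g i ≠ bad)).card
      ≤ Nc P m z' := by
    unfold Nc
    apply Finset.card_le_card_of_injOn f
    · intro g hg
      rw [Finset.mem_coe, Finset.mem_filter] at hg ⊢
      exact ⟨Finset.mem_univ _, by rw [key g hg.2.2]; exact hg.2.1⟩
    · intro g hg g' hg' hgg
      rw [Finset.mem_coe, Finset.mem_filter] at hg hg'
      funext j
      by_cases hj : j = i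
      · subst hj
        have h1 := congrFun hgg j
        simp only [hf, Function.update_self] at h1
        have e1 : nv (g j) % m = nv (g' j) % m := congrArg Fin.val h1
        rw [Nat.mod_eq_of_lt (hnv_lt _ hg.2.2), Nat.mod_eq_of_lt (hnv_lt _ hg'.2.2)] at e1
        have hv : (g j).val ≠ bad.val := fun h => hg.2.2 (Fin.ext h)
        have hv' : (g' j).val ≠ bad.val := fun h => hg'.2.2 (Fin.ext h)
        apply Fin.ext
        rcases hd with h1' | h1' <;> simp [hnv, hbad, h1'] at e1 hv hv' <;> omega
      · have h1 := congrFun hgg j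
        simpa [hf, Function.update_of_ne hj] using h1
  calc Nc P m z ≤ ((Finset.univ.filter (fun g : Fin n → Fin m => P (cpt z g) ∧ g i ≠ bad))
        ∪ (Finset.univ.filter (fun g : Fin n → Fin m => g i = bad))).card :=
        Finset.card_le_card hsub
    _ ≤ (Finset.univ.filter (fun g : Fin n → Fin m => P (cpt z g) ∧ g i ≠ bad)).card
        + (Finset.univ.filter (fun g : Fin n → Fin m => g i = bad)).card :=
        Finset.card_union_le _ _
    _ ≤ Nc P m z' + m ^ (n-1) := by
        rw [card_coord_fiber hn i bad]
        exact Nat.add_le_add_right hinj _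

lemma Nc_step_abs (hn : 0 < n) (hm : 0 < m) (z : Fin n → ℤ) (i : Fin n) (d : ℤ)
    (hd : d = 1 ∨ d = -1) :
    Nc P m (Function.update z i (z i + d)) ≤ Nc P m z + m ^ (n-1) := by
  set z' := Function.update z i (z i + d) with hz'
  have hzz : z = Function.update z' i (z' i + (-d)) := by
    funext j
    by_cases hj : j = i
    · subst hj; simp [hz', Function.update_self]
    · simp [hz', Function.update_of_ne hj]
  calc Nc P m z' ≤ Nc P m (Function.update z' i (z' i + (-d))) + m ^ (n-1) :=
      Nc_le_step P hn hm z' i (-d) (by rcases hd with h | h <;> simp [h])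
  _ = Nc P m z + m ^ (n-1) := by rw [← hzz]

/-- coordinate walks in `ℤⁿ` -/
lemma exists_walk (a b : Fin n → ℤ) :
    ∃ (K : ℕ) (φ : ℕ → Fin n → ℤ), φ 0 = a ∧ φ K = b ∧
      ∀ j < K, ∃ (i : Fin n) (d : ℤ), (d = 1 ∨ d = -1) ∧ φ (j+1) = Function.update (φ j) i (φ j i + d) := by
  classical
  suffices h : ∀ N (a b : Fin n → ℤ), (∑ i, (b i - a i).natAbs) = N →
      ∃ (K : ℕ) (φ : ℕ → Fin n → ℤ), φ 0 = a ∧ φ K = b ∧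
      ∀ j < K, ∃ (i : Fin n) (d : ℤ), (d = 1 ∨ d = -1) ∧ φ (j+1) = Function.update (φ j) i (φ j i + d) by
    exact h _ a b rfl
  intro N
  induction N using Nat.strong_induction_on with
  | _ N ih =>
    intro a b hab
    by_cases hN : N = 0
    · subst hN
      have : a = b := by
        funext i
        have : (b i - a i).natAbs = 0 := by
          have := Finset.sum_eq_zero_iff.mp hab i (Finset.mem_univ i)
          exact this
        omega
      exact ⟨0, fun _ => a, rfl, by rw [this], fun j hj => absurd hj (Nat.not_lt_zero j)⟩
    · have : ∃ i, a i ≠ b i := by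
        by_contra hc
        push_neg at hc
        apply hN
        rw [← hab]
        apply Finset.sum_eq_zero
        intro i _
        rw [hc i]
        simp
      obtain ⟨i, hi⟩ := this
      set d : ℤ := if a i < b i then 1 else -1 with hd
      set a' := Function.update a i (a i + d) with ha'
      have hsum : (∑ i', (b i' - a' i').natAbs) = N - 1 := by
        rw [← hab]
        rw [show (Finset.univ : Finset (Fin n)) = insert i (Finset.univ.erase i) by
          rw [Finset.insert_erase (Finset.mem_univ i)]]
        rw [Finset.sum_insert (Finset.notMem_erase i _),
            Finset.sum_insert (Finset.notMem_erase i _)]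
        have h1 : ∀ j ∈ Finset.univ.erase i, (b j - a' j).natAbs = (b j - a j).natAbs := by
          intro j hj
          rw [ha', Function.update_of_ne (Finset.mem_erase.mp hj).1]
        rw [Finset.sum_congr rfl h1]
        have h2 : (b i - a' i).natAbs = (b i - a i).natAbs - 1 := by
          rw [ha', Function.update_self, hd]
          split <;> rename_i h <;> omega
        have h3 : 1 ≤ (b i - a i).natAbs := by omega
        omega
      have hlt : N - 1 < N := by omega
      obtain ⟨K, φ, hφ0, hφK, hstep⟩ := ih (N-1) hlt a' b hsum
      refine ⟨K+1, fun j => if j = 0 then a else φ (j-1), by simp, by simp [hφK], ?_⟩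
      intro j hj
      by_cases hj0 : j = 0
      · subst hj0
        refine ⟨i, d, by rw [hd]; split <;> simp, ?_⟩
        simp [hφ0, ha']
      · obtain ⟨i', d', hd', hstep'⟩ := hstep (j-1) (by omega)
        refine ⟨i', d', hd', ?_⟩
        simp only [if_neg hj0, if_neg (by omega : ¬ j + 1 = 0)]
        rw [show j + 1 - 1 = (j-1) + 1 by omega]
        exact hstep'

/-- discrete intermediate value -/
lemma discrete_ivt (f : ℕ → ℕ) (K s M : ℕ) (h0 : 2*M < 3 * f 0) (hK : 3 * f K ≤ 2*M)
    (hstep : ∀ j < K, f j ≤ f (j+1) + s) :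
    ∃ j, 3 * f j ≤ 2*M ∧ 2*M < 3 * f j + 3*s := by
  classical
  have hex : ∃ j, 3 * f j ≤ 2*M := ⟨K, hK⟩
  set j := Nat.find hex with hj
  have hjQ : 3 * f j ≤ 2*M := Nat.find_spec hex
  have hj0 : j ≠ 0 := by
    intro h
    rw [h] at hjQ
    omega
  have hjK : j ≤ K := Nat.find_min' hex hK
  have hprev : ¬ (3 * f (j-1) ≤ 2*M) := Nat.find_min hex (by omega)
  have hs := hstep (j-1) (by omega)
  rw [show j - 1 + 1 = j by omega] at hs
  exact ⟨j, hjQ, by omega⟩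

lemma balanced_cube (hn : 0 < n) (hm : 9 ≤ m) (za zb : Fin n → ℤ)
    (ha : Nc P m za = m ^ n) (hb : Nc P m zb = 0) :
    ∃ z, m ^ n ≤ 3 * Nc P m z ∧ 3 * Nc P m z ≤ 2 * m ^ n := by
  have hm0 : 0 < m := by omega
  obtain ⟨K, φ, hφ0, hφK, hstep⟩ := exists_walk za zb
  have hstep' : ∀ j < K, Nc P m (φ j) ≤ Nc P m (φ (j+1)) + m ^ (n-1) := by
    intro j hj
    obtain ⟨i, d, hd, he⟩ := hstep j hj
    rw [he]
    exact Nc_le_step P hn hm0 (φ j) i d hd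
  have hMpos : 0 < m ^ n := pow_pos hm0 n
  obtain ⟨j, hle, hgt⟩ := discrete_ivt (fun j => Nc P m (φ j)) K (m ^ (n-1)) (m ^ n)
    (by show 2 * m ^ n < 3 * Nc P m (φ 0); rw [hφ0, ha]; omega) (by show 3 * Nc P m (φ K) ≤ 2 * m ^ n; rw [hφK, hb]; omega) hstep'
  refine ⟨φ j, ?_, hle⟩
  have h3 : 3 * m ^ (n-1) ≤ m ^ n := by
    calc 3 * m ^ (n-1) ≤ m * m ^ (n-1) := Nat.mul_le_mul_right _ (by omega)
    _ = m ^ (n-1+1) := (pow_succ' m (n-1)).symm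
    _ = m ^ n := by congr 1; omega
  omega

end cube


section eucl
open AffineMap
variable {N : ℕ}

local notation "E" => EuclideanSpace ℝ (Fin N)

lemma coord_le_dist (x y : E) (i : Fin N) : |x i - y i| ≤ dist x y := by
  rw [EuclideanSpace.dist_eq]
  have h1 : |x i - y i| = Real.sqrt ((x i - y i)^2) := (Real.sqrt_sq_eq_abs _).symm
  rw [h1]
  apply Real.sqrt_le_sqrt
  have := Finset.single_le_sum (f := fun j => dist (x j) (y j)^2)
    (fun j _ => sq_nonneg _) (Finset.mem_univ i)
  simpa [Real.dist_eq, sq_abs] using this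

lemma dist_le_sum_abs (x y : E) : dist x y ≤ ∑ i, |x i - y i| := by
  rw [EuclideanSpace.dist_eq]
  have h2 : ∑ i, dist (x i) (y i)^2 ≤ (∑ i, |x i - y i|)^2 := by
    have := Finset.sum_sq_le_sq_sum_of_nonneg
      (f := fun i => |x i - y i|) (s := Finset.univ) (fun i _ => abs_nonneg _)
    simpa [Real.dist_eq, sq_abs] using this
  calc Real.sqrt (∑ i, dist (x i) (y i)^2) ≤ Real.sqrt ((∑ i, |x i - y i|)^2) :=
      Real.sqrt_le_sqrt h2
  _ = abs (∑ i, |x i - y i|) := Real.sqrt_sq_eq_abs _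
  _ = ∑ i, |x i - y i| := abs_of_nonneg (Finset.sum_nonneg fun i _ => abs_nonneg _)

lemma lineMap_coord (x y : E) (t : ℝ) (i : Fin N) :
    (lineMap x y t : E) i = x i + t * (y i - x i) := by
  simp [AffineMap.lineMap_apply]
  ring

end eucl

section across
open AffineMap
variable {N : ℕ} {k L D : ℝ} {Z : Set (EuclideanSpace ℝ (Fin N))}
  {p q x y : EuclideanSpace ℝ (Fin N)}

/-- the set of points `k`-connected to `p` avoiding the `L`-neighbourhood of `Z` -/
def Aset (k L : ℝ) (Z : Set (EuclideanSpace ℝ (Fin N))) (p : EuclideanSpace ℝ (Fin N)) :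
    Set (EuclideanSpace ℝ (Fin N)) :=
  {x | KConn k (Set.univ \ thickSet Z L) p x}

lemma seg_avoid (hk : 0 < k)
    (h : ∀ t ∈ Set.Icc (0:ℝ) 1, (lineMap x y t : EuclideanSpace ℝ (Fin N)) ∉ thickSet Z L) :
    KConn k (Set.univ \ thickSet Z L) x y :=
  seg_conn hk (fun t ht => ⟨Set.mem_univ _, h t ht⟩)

lemma deep_ball_conn (hk : 0 < k) (hL : 0 ≤ L)
    (hdeep : ∀ z ∈ Z, D ≤ dist p z) (hx : dist p x ≤ D - L - k) :
    x ∈ Aset k L Z p := by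
  apply seg_avoid hk
  intro t ht hmem
  obtain ⟨zz, hzz, hdzz⟩ := hmem
  have h1 : dist (lineMap p x t : EuclideanSpace ℝ (Fin N)) p = |t| * dist p x :=
    dist_lineMap_left p x t
  have h2 : |t| ≤ 1 := abs_le.mpr ⟨by linarith [ht.1], ht.2⟩
  have h3 : dist p zz ≤ dist p (lineMap p x t : EuclideanSpace ℝ (Fin N)) + L := by
    calc dist p zz ≤ dist p (lineMap p x t : EuclideanSpace ℝ (Fin N))
        + dist (lineMap p x t : EuclideanSpace ℝ (Fin N)) zz := dist_triangle _ _ _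
    _ ≤ _ := by linarith
  have h4 : dist p (lineMap p x t : EuclideanSpace ℝ (Fin N)) ≤ dist p x := by
    rw [dist_comm, h1]
    nlinarith [dist_nonneg (x := p) (y := x)]
  have := hdeep zz hzz
  have hdx : 0 ≤ dist p x := dist_nonneg
  linarith

lemma deep_ball_conn_q (hk : 0 < k) (hL : 0 ≤ L)
    (hdeep : ∀ z ∈ Z, D ≤ dist q z) (hx : dist x q ≤ D - L - k)
    (hxA : x ∈ Aset k L Z p) : q ∈ Aset k L Z p := by
  refine kconn_trans hxA (seg_avoid hk ?_)
  intro t ht hmem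
  obtain ⟨zz, hzz, hdzz⟩ := hmem
  have h1 : dist (lineMap x q t : EuclideanSpace ℝ (Fin N)) q = |1 - t| * dist x q :=
    dist_lineMap_right x q t
  have h2 : |1 - t| ≤ 1 := abs_le.mpr ⟨by linarith [ht.2], by linarith [ht.1]⟩
  have h4 : dist (lineMap x q t : EuclideanSpace ℝ (Fin N)) q ≤ dist x q := by
    rw [h1]
    nlinarith [dist_nonneg (x := x) (y := q)]
  have h3 : dist q zz ≤ dist x q + L := by
    calc dist q zz ≤ dist q (lineMap x q t : EuclideanSpace ℝ (Fin N))
        + dist (lineMap x q t : EuclideanSpace ℝ (Fin N)) zz := dist_triangle _ _ _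
    _ ≤ _ := by rw [dist_comm q _]; linarith
  have := hdeep zz hzz
  linarith

lemma crossing (hk : 0 < k) (hx : x ∈ Aset k L Z p) (hy : y ∉ Aset k L Z p) :
    ∃ t ∈ Set.Icc (0:ℝ) 1, (lineMap x y t : EuclideanSpace ℝ (Fin N)) ∈ thickSet Z L := by
  by_contra hc
  push_neg at hc
  exact hy (kconn_trans hx (seg_avoid hk hc))

lemma q_not_Aset {C₁ C₂ : Set (EuclideanSpace ℝ (Fin N))}
    (h₁ : IsKComponent k (Set.univ \ thickSet Z L) C₁)
    (h₂ : IsKComponent k (Set.univ \ thickSet Z L) C₂)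
    (hne : C₁ ≠ C₂) (hp : p ∈ C₁) (hq : q ∈ C₂) : q ∉ Aset k L Z p := by
  intro hqA
  obtain ⟨n, c, hc0, hcn, hcmem, hcd⟩ := hqA
  set Y := Set.univ \ thickSet Z L with hY
  set Pset : Set (EuclideanSpace ℝ (Fin N)) := {x | ∃ i ≤ n, c i = x} with hPset
  set C' := C₁ ∪ C₂ ∪ Pset with hC'
  have hPsetY : Pset ⊆ Y := by
    rintro x ⟨i, hi, rfl⟩
    exact hcmem i hi
  have hsubY : C' ⊆ Y := by
    rintro x (hx | hx)
    · rcases hx with hx | hx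
      · exact h₁.1 hx
      · exact h₂.1 hx
    · exact hPsetY hx
  have hpq : KConn k Pset p q :=
    ⟨n, c, hc0, hcn, fun i hi => ⟨i, hi, rfl⟩, hcd⟩
  have hPsetC' : Pset ⊆ C' := fun x hx => Or.inr hx
  have hC₁C' : C₁ ⊆ C' := fun x hx => Or.inl (Or.inl hx)
  have hC₂C' : C₂ ⊆ C' := fun x hx => Or.inl (Or.inr hx)
  have to_q : ∀ a ∈ C', KConn k C' a q := by
    rintro a (ha | ha)
    · rcases ha with ha | ha
      · exact kconn_trans (kconn_mono hC₁C' (h₁.2.1 a ha p hp))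
          (kconn_mono hPsetC' hpq)
      · exact kconn_mono hC₂C' (h₂.2.1 a ha q hq)
    · obtain ⟨i, hi, rfl⟩ := ha
      refine kconn_mono hPsetC' ⟨n - i, fun j => c (i + j), by simp, ?_, ?_, ?_⟩
      · show c (i + (n - i)) = q
        rw [show i + (n - i) = n by omega, hcn]
      · intro j hj
        exact ⟨i + j, by omega, rfl⟩
      · intro j hj
        show dist (c (i + j)) (c (i + (j + 1))) ≤ k
        rw [show i + (j + 1) = (i + j) + 1 by omega]
        exact hcd (i + j) (by omega)
  have hconnC' : KCoarselyConnected k C' := fun a ha b hb =>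
    kconn_trans (to_q a ha) (kconn_symm (to_q b hb))
  have e1 : C' = C₁ := h₁.2.2 C' hC₁C' hsubY hconnC'
  have e2 : C' = C₂ := h₂.2.2 C' hC₂C' hsubY hconnC'
  exact hne (e1 ▸ e2)

end across

section svol_low
variable {N : ℕ}

lemma svol_lower_bound (S' : Set (EuclideanSpace ℝ (Fin N))) (s0 : EuclideanSpace ℝ (Fin N))
    (r : ℝ) (P : Finset (EuclideanSpace ℝ (Fin N)))
    (hP : ∀ x ∈ P, x ∈ Metric.closedBall s0 r ∩ S')
    (hd : ∀ x ∈ P, ∀ y ∈ P, x ≠ y → 1 ≤ dist x y) :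
    P.card ≤ svol (1/5) (Metric.closedBall s0 r ∩ S') := by
  classical
  have hne : {n : ℕ | ∃ F : Finset (EuclideanSpace ℝ (Fin N)), F.card = n ∧
      Metric.closedBall s0 r ∩ S' ⊆ ⋃ c ∈ F, Metric.closedBall c (1/5)}.Nonempty := by
    obtain ⟨t, ht⟩ := (isCompact_closedBall s0 r).elim_finite_subcover
      (fun c : EuclideanSpace ℝ (Fin N) => Metric.ball c (1/5)) (fun _ => Metric.isOpen_ball)
      (fun y _ => Set.mem_iUnion.mpr ⟨y, Metric.mem_ball_self (by norm_num)⟩)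
    refine ⟨t.card, t, rfl, ?_⟩
    intro x hx
    have := ht (Set.mem_of_mem_inter_left hx)
    rw [Set.mem_iUnion₂] at this ⊢
    obtain ⟨c, hc, hxc⟩ := this
    exact ⟨c, hc, Metric.ball_subset_closedBall hxc⟩
  apply le_csInf hne
  rintro b ⟨F, rfl, hF⟩
  have hchoice : ∀ x (hx : x ∈ P), ∃ cc, cc ∈ F ∧ x ∈ Metric.closedBall cc (1/5) := by
    intro x hx
    obtain ⟨c, hc, hxc⟩ := Set.mem_iUnion₂.mp (hF (hP x hx))
    exact ⟨c, hc, hxc⟩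
  choose f hf1 hf2 using hchoice
  set g : EuclideanSpace ℝ (Fin N) → EuclideanSpace ℝ (Fin N) :=
    fun x => if hx : x ∈ P then f x hx else s0 with hgdef
  have hg : ∀ x (hx : x ∈ P), g x = f x hx := fun x hx => dif_pos hx
  apply Finset.card_le_card_of_injOn g
  · intro x hx
    rw [hg x hx]
    exact hf1 x hx
  · intro x hx y hy hxy
    by_contra hne'
    have h1 : x ∈ Metric.closedBall (g x) (1/5) := by rw [hg x hx]; exact hf2 x hx
    have h2 : y ∈ Metric.closedBall (g x) (1/5) := by rw [hxy, hg y hy]; exact hf2 y hy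
    have : dist x y ≤ 2/5 := by
      calc dist x y ≤ dist x (g x) + dist y (g x) := dist_triangle_right _ _ _
      _ ≤ 1/5 + 1/5 := add_le_add (Metric.mem_closedBall.mp h1) (Metric.mem_closedBall.mp h2)
      _ = 2/5 := by norm_num
    have := hd x hx y hy hne'
    linarith

end svol_low



/-- identification of plain functions with Euclidean space points -/
def toE {N : ℕ} (v : Fin N → ℝ) : EuclideanSpace ℝ (Fin N) := WithLp.toLp 2 v

lemma toE_apply {N : ℕ} (v : Fin N → ℝ) (i : Fin N) : toE v i = v i := rfl

lemma mod_sep {a b s : ℕ} (h : a % s = b % s) (hlt : a < b) : a + s ≤ b := by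
  have hs : 0 < s := by
    rcases Nat.eq_zero_or_pos s with h0 | h0
    · subst h0; simp at h; omega
    · exact h0
  have hq : a / s < b / s := by
    by_contra hq
    push_neg at hq
    have : b ≤ a := by
      calc b = s * (b/s) + b%s := (Nat.div_add_mod b s).symm
      _ ≤ s * (a/s) + a%s := by rw [← h]; exact Nat.add_le_add_right (Nat.mul_le_mul_left _ hq) _
      _ = a := Nat.div_add_mod a s
    omega
  calc a + s = s * (a/s) + a%s + s := by rw [Nat.div_add_mod]
  _ = s * (a/s + 1) + a%s := by ring
  _ ≤ s * (b/s) + b%s := by rw [← h]; exact Nat.add_le_add_right (Nat.mul_le_mul_left _ hq) _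
  _ = b := Nat.div_add_mod b s

/-- variant of `comb_main` with an abstract witness set -/
theorem comb_main' {n m : ℕ} (F : (Fin n → Fin m) → Bool) (hn : 0 < n) (hm : 0 < m)
    (h1 : m ^ n ≤ 3 * (Finset.univ.filter (fun v => F v = true)).card)
    (h2 : 3 * (Finset.univ.filter (fun v => F v = true)).card ≤ 2 * m ^ n) :
    ∃ (i : Fin n) (V : Finset (Fin n → Fin m)),
      (∀ v ∈ V, (v i).val = 0 ∧ Mixed F i v) ∧
      m ^ (2*n) ≤ 9 * n * m ^ (n+1) * V.card := by
  classical
  obtain ⟨i, hi⟩ := comb_main F hn hm h1 h2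
  refine ⟨i, _, ?_, hi⟩
  intro v hv
  rw [Finset.mem_filter] at hv
  exact ⟨by rw [hv.2.1], hv.2.2⟩


set_option maxHeartbeats 2000000 in
/-- Every family of subsets coarsely separating `ℝⁿ` (`n ≥ 2`) has growth at least
`r^{n−1}`: `V_𝒮(r) ≥ c·r^{n−1}` for all large enough `r`, where volumes are `1/5`-volumes. -/
theorem euclidean_separation_growth
    (n : ℕ) (hn : 2 ≤ n)
    (𝒮 : Set (Set (EuclideanSpace ℝ (Fin n))))
    (hsep : CoarselySeparates 𝒮 (Set.univ : Set (EuclideanSpace ℝ (Fin n)))) :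
    ∃ c > (0 : ℝ), ∃ r₁ ≥ (0 : ℝ), ∀ r, r₁ ≤ r → ∃ S ∈ 𝒮, ∃ s ∈ S,
      c * r ^ (n - 1) ≤ (svol (1 / 5) (Metric.closedBall s r ∩ S) : ℝ) := by
  classical
  obtain ⟨k, hk, L, hL, hconn, hsepD⟩ := hsep
  have hn0 : 0 < n := by omega
  have hnR : (0:ℝ) < n := by exact_mod_cast hn0
  set σ : ℕ := ⌈2*L⌉₊ + 1 with hσdef
  have hσpos : 0 < σ := Nat.succ_pos _
  have hσL : 2*L + 1 ≤ (σ:ℝ) := by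
    have h1 := Nat.le_ceil (2*L)
    have h2 : ((⌈2*L⌉₊ : ℕ) : ℝ) + 1 = (σ:ℝ) := by rw [hσdef]; push_cast; ring
    linarith
  have hσR : (0:ℝ) < σ := by exact_mod_cast hσpos
  set Kc : ℝ := 9*n*(σ:ℝ)^n*(4*n)^(n-1) with hKc
  have hKcpos : 0 < Kc := by rw [hKc]; positivity
  refine ⟨1/Kc, by positivity, 100*(n+1) + 100*(L+1), by positivity, ?_⟩
  intro r hr
  have hrpos : (0:ℝ) < r := by nlinarith
  set m : ℕ := ⌊r/(2*n)⌋₊ with hmdef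
  have hm9 : 9 ≤ m := by
    apply Nat.le_floor
    rw [le_div_iff₀ (by positivity)]
    push_cast
    nlinarith
  have hm0 : 0 < m := by omega
  have hmR : (0:ℝ) < m := by exact_mod_cast hm0
  have hmle : (m:ℝ) ≤ r/(2*n) := Nat.floor_le (by positivity)
  have hnm : (n:ℝ)*m ≤ r/2 := by
    have h1 : (n:ℝ)*m ≤ (n:ℝ)*(r/(2*n)) := by nlinarith
    have h2 : (n:ℝ)*(r/(2*n)) = r/2 := by field_simp
    linarith
  have hrm : r ≤ 4*n*m := by
    have h1 : r/(2*n) - 1 < (m:ℝ) := Nat.sub_one_lt_floor _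
    have h2 : r/(2*n) < (m:ℝ)+1 := by linarith
    have h3 : r < ((m:ℝ)+1) * (2*n) := (div_lt_iff₀ (by positivity)).mp h2
    nlinarith [hmR]
  set D : ℝ := L + k + n*((m:ℝ)+2) + 1 with hDdef
  have hD0 : 0 ≤ D := by
    have : (0:ℝ) ≤ (n:ℝ)*((m:ℝ)+2) := by positivity
    rw [hDdef]; linarith
  obtain ⟨Z, hZS, C₁, C₂, h₁, h₂, hne, hpe, hqe⟩ := hsepD D hD0
  obtain ⟨p, hpC₁, hpdeep⟩ := hpe
  obtain ⟨q, hqC₂, hqdeep⟩ := hqe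
  have hqnA : q ∉ Aset k L Z p := q_not_Aset h₁ h₂ hne hpC₁ hqC₂
  set P : (Fin n → ℝ) → Prop := fun v => toE v ∈ Aset k L Z p with hPdef
  letI : DecidablePred P := Classical.decPred P
  set zp : Fin n → ℤ := fun i => ⌊p i⌋ with hzpdef
  set zq : Fin n → ℤ := fun i => ⌊q i⌋ with hzqdef
  -- every point of a cube anchored at x is within n*m of x
  have cube_close : ∀ (x : EuclideanSpace ℝ (Fin n)) (zz : Fin n → ℤ), (∀ i, zz i = ⌊x i⌋) →
      ∀ (g : Fin n → Fin m), dist x (toE (cpt zz g)) ≤ (n:ℝ)*m := by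
    intro x zz hzz g
    refine le_trans (dist_le_sum_abs _ _) ?_
    have hterm : ∀ i : Fin n, |x i - toE (cpt zz g) i| ≤ (m:ℝ) := by
      intro i
      have h1 : ((⌊x i⌋:ℤ) : ℝ) ≤ x i := Int.floor_le _
      have h2 : x i < ((⌊x i⌋:ℤ) : ℝ) + 1 := Int.lt_floor_add_one _
      have h3 : ((g i : ℕ) : ℝ) < (m:ℝ) := by exact_mod_cast (g i).isLt
      have h4 : (0:ℝ) ≤ ((g i : ℕ) : ℝ) := Nat.cast_nonneg _
      have h5 : toE (cpt zz g) i = ((zz i : ℤ) : ℝ) + ((g i : ℕ) : ℝ) := rfl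
      rw [h5, hzz i, abs_le]
      constructor <;> nlinarith [hmR]
    calc ∑ i, |x i - toE (cpt zz g) i| ≤ ∑ _i : Fin n, (m:ℝ) :=
        Finset.sum_le_sum (fun i _ => hterm i)
    _ = (n:ℝ)*m := by rw [Finset.sum_const, Finset.card_univ, Fintype.card_fin, nsmul_eq_mul]
  have hNczp : Nc P m zp = m ^ n := by
    have hall : ∀ g ∈ (Finset.univ : Finset (Fin n → Fin m)), P (cpt zp g) := by
      intro g _
      simp only [hPdef]
      apply deep_ball_conn hk hL hpdeep
      have h1 := cube_close p zp (fun i => by rw [hzpdef]) g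
      have h2 : (0:ℝ) ≤ (n:ℝ) := le_of_lt hnR
      have h3 : D - L - k = (n:ℝ)*((m:ℝ)+2) + 1 := by rw [hDdef]; ring
      rw [h3]
      nlinarith
    unfold Nc
    rw [Finset.filter_true_of_mem hall, Finset.card_univ]
    simp
  have hNczq : Nc P m zq = 0 := by
    unfold Nc
    rw [Finset.card_eq_zero, Finset.filter_eq_empty_iff]
    intro g _ hPg
    simp only [hPdef] at hPg
    apply hqnA
    refine deep_ball_conn_q hk hL hqdeep ?_ hPg
    have h1 := cube_close q zq (fun i => by rw [hzqdef]) g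
    have h2 : (0:ℝ) ≤ (n:ℝ) := le_of_lt hnR
    have h3 : D - L - k = (n:ℝ)*((m:ℝ)+2) + 1 := by rw [hDdef]; ring
    rw [h3, dist_comm]
    nlinarith
  obtain ⟨z, hz1, hz2⟩ := balanced_cube P hn0 hm9 zp zq hNczp hNczq
  set F : (Fin n → Fin m) → Bool := fun g => decide (P (cpt z g)) with hFdef
  have hfilter : (Finset.univ.filter (fun v => F v = true))
      = (Finset.univ.filter (fun g : Fin n → Fin m => P (cpt z g))) := by
    apply Finset.filter_congr
    intro g _
    simp [hFdef]
  obtain ⟨i0, V, hVprop, hcomb⟩ := comb_main' F hn0 hm0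
    (by rw [hfilter]; exact hz1) (by rw [hfilter]; exact hz2)
  have hVpos : 0 < V.card := by
    rcases Nat.eq_zero_or_pos V.card with h0 | h0
    · exfalso
      rw [h0, Nat.mul_zero] at hcomb
      have := pow_pos hm0 (2*n)
      omega
    · exact h0
  -- pigeonhole modulo σ
  set cls : (Fin n → Fin m) → (Fin n → Fin σ) :=
    fun v j => ⟨(v j).val % σ, Nat.mod_lt _ hσpos⟩ with hclsdef
  have hVne : V.Nonempty := Finset.card_pos.mp hVpos
  obtain ⟨b0, hb0mem, hb0max⟩ := Finset.exists_max_image (V.image cls)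
    (fun b => (V.filter (fun v => cls v = b)).card) (hVne.image cls)
  set W := V.filter (fun v => cls v = b0) with hWdef
  have hWV : W ⊆ V := Finset.filter_subset _ _
  have hVW : V.card ≤ σ^n * W.card := by
    calc V.card = ∑ b ∈ V.image cls, (V.filter (fun v => cls v = b)).card :=
        Finset.card_eq_sum_card_fiberwise (fun x hx => Finset.mem_image_of_mem cls hx)
    _ ≤ ∑ _b ∈ V.image cls, W.card := Finset.sum_le_sum (fun b hb => hb0max b hb)
    _ = (V.image cls).card * W.card := by rw [Finset.sum_const, smul_eq_mul]
    _ ≤ σ^n * W.card := by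
        apply Nat.mul_le_mul_right
        refine le_trans (Finset.card_le_univ _) ?_
        rw [Fintype.card_fun, Fintype.card_fin, Fintype.card_fin]
  have hcount : m^(n-1) ≤ 9*n*σ^n*W.card := by
    have h1 : m^(2*n) ≤ 9*n*m^(n+1)*(σ^n*W.card) :=
      le_trans hcomb (Nat.mul_le_mul_left _ hVW)
    have h3 : m^(n+1) * m^(n-1) ≤ m^(n+1) * (9*n*σ^n*W.card) := by
      calc m^(n+1) * m^(n-1) = m^(2*n) := by rw [← pow_add]; congr 1; omega
      _ ≤ 9*n*m^(n+1)*(σ^n*W.card) := h1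
      _ = m^(n+1) * (9*n*σ^n*W.card) := by ring
    exact Nat.le_of_mul_le_mul_left h3 (pow_pos hm0 (n+1))
  have hWpos : 0 < W.card := by
    rcases Nat.eq_zero_or_pos W.card with h0 | h0
    · rw [h0] at hcount
      simp at hcount
      have := pow_pos hm0 (n-1)
      omega
    · exact h0
  -- crossing data
  have crossdata : ∀ v ∈ W, ∃ u zz : EuclideanSpace ℝ (Fin n), zz ∈ Z ∧ dist u zz ≤ L ∧
      (∀ j : Fin n, j ≠ i0 → u j = ((z j : ℤ) : ℝ) + ((v j : ℕ):ℝ)) ∧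
      (((z i0 : ℤ) : ℝ) ≤ u i0 ∧ u i0 ≤ ((z i0 : ℤ) : ℝ) + m) := by
    intro v hv
    obtain ⟨hv0, a, b, hab⟩ := hVprop v (hWV hv)
    have hmix : ∃ ga gb : Fin n → Fin m, (∀ j, j ≠ i0 → ga j = v j) ∧
        (∀ j, j ≠ i0 → gb j = v j) ∧ P (cpt z ga) ∧ ¬ P (cpt z gb) := by
      have hup : ∀ (c : Fin m) (j : Fin n), j ≠ i0 → Function.update v i0 c j = v j :=
        fun c j hj => Function.update_of_ne hj _ _
      cases hA : F (Function.update v i0 a) <;> cases hB : F (Function.update v i0 b)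
      · exact absurd (hA.trans hB.symm) hab
      · refine ⟨Function.update v i0 b, Function.update v i0 a, hup b, hup a, ?_, ?_⟩
        · rw [hFdef] at hB; exact of_decide_eq_true hB
        · rw [hFdef] at hA; exact of_decide_eq_false hA
      · refine ⟨Function.update v i0 a, Function.update v i0 b, hup a, hup b, ?_, ?_⟩
        · rw [hFdef] at hA; exact of_decide_eq_true hA
        · rw [hFdef] at hB; exact of_decide_eq_false hB
      · exact absurd (hA.trans hB.symm) hab
    obtain ⟨ga, gb, hga, hgb, hPa, hPb⟩ := hmix
    simp only [hPdef] at hPa hPb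
    obtain ⟨t, ht, hmem⟩ := crossing hk hPa hPb
    obtain ⟨zz, hzz, hdzz⟩ := hmem
    refine ⟨_, zz, hzz, hdzz, ?_, ?_⟩
    · intro j hj
      rw [lineMap_coord]
      have e1 : toE (cpt z ga) j = ((z j : ℤ):ℝ) + ((ga j : ℕ):ℝ) := rfl
      have e2 : toE (cpt z gb) j = ((z j : ℤ):ℝ) + ((gb j : ℕ):ℝ) := rfl
      rw [e1, e2, hga j hj, hgb j hj]
      ring
    · rw [lineMap_coord]
      have e1 : toE (cpt z ga) i0 = ((z i0 : ℤ):ℝ) + ((ga i0 : ℕ):ℝ) := rfl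
      have e2 : toE (cpt z gb) i0 = ((z i0 : ℤ):ℝ) + ((gb i0 : ℕ):ℝ) := rfl
      have c1 : (0:ℝ) ≤ ((ga i0 : ℕ):ℝ) := Nat.cast_nonneg _
      have c2 : ((ga i0 : ℕ):ℝ) < m := by exact_mod_cast (ga i0).isLt
      have c3 : (0:ℝ) ≤ ((gb i0 : ℕ):ℝ) := Nat.cast_nonneg _
      have c4 : ((gb i0 : ℕ):ℝ) < m := by exact_mod_cast (gb i0).isLt
      rw [e1, e2]
      constructor <;> nlinarith [ht.1, ht.2]
  choose uf zf hzfZ hdzf hucoord hui0 using crossdata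
  -- upper distance bound
  have hdistup : ∀ v (hv : v ∈ W), ∀ v' (hv' : v' ∈ W),
      dist (zf v hv) (zf v' hv') ≤ 2*L + (n:ℝ)*m := by
    intro v hv v' hv'
    have hcoord : ∀ j : Fin n, |uf v hv j - uf v' hv' j| ≤ (m:ℝ) := by
      intro j
      by_cases hj : j = i0
      · subst hj
        obtain ⟨l1, l2⟩ := hui0 v hv
        obtain ⟨l3, l4⟩ := hui0 v' hv'
        rw [abs_le]
        constructor <;> linarith
      · rw [hucoord v hv j hj, hucoord v' hv' j hj]
        have c1 : (0:ℝ) ≤ ((v j : ℕ):ℝ) := Nat.cast_nonneg _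
        have c2 : ((v j : ℕ):ℝ) < m := by exact_mod_cast (v j).isLt
        have c3 : (0:ℝ) ≤ ((v' j : ℕ):ℝ) := Nat.cast_nonneg _
        have c4 : ((v' j : ℕ):ℝ) < m := by exact_mod_cast (v' j).isLt
        rw [add_sub_add_left_eq_sub, abs_le]
        constructor <;> linarith
    have huu : dist (uf v hv) (uf v' hv') ≤ (n:ℝ)*m := by
      refine le_trans (dist_le_sum_abs _ _) ?_
      calc ∑ j, |uf v hv j - uf v' hv' j| ≤ ∑ _j : Fin n, (m:ℝ) :=
          Finset.sum_le_sum (fun j _ => hcoord j)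
      _ = (n:ℝ)*m := by rw [Finset.sum_const, Finset.card_univ, Fintype.card_fin, nsmul_eq_mul]
    calc dist (zf v hv) (zf v' hv')
        ≤ dist (zf v hv) (uf v hv) + dist (uf v hv) (uf v' hv') + dist (uf v' hv') (zf v' hv') :=
          dist_triangle4 _ _ _ _
    _ ≤ L + (n:ℝ)*m + L := by
        have d1 := hdzf v hv
        have d2 := hdzf v' hv'
        rw [dist_comm (zf v hv)]
        linarith
    _ = 2*L + (n:ℝ)*m := by ring
  -- lower distance bound
  have hdistlow : ∀ v (hv : v ∈ W), ∀ v' (hv' : v' ∈ W), v ≠ v' →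
      1 ≤ dist (zf v hv) (zf v' hv') := by
    intro v hv v' hv' hvv
    obtain ⟨j, hj⟩ : ∃ j, v j ≠ v' j := by
      by_contra hc
      push_neg at hc
      exact hvv (funext hc)
    have hji0 : j ≠ i0 := by
      intro h
      subst h
      have e1 : (v j).val = 0 := (hVprop v (hWV hv)).1
      have e2 : (v' j).val = 0 := (hVprop v' (hWV hv')).1
      exact hj (Fin.ext (e1.trans e2.symm))
    have hmod : (v j).val % σ = (v' j).val % σ := by
      have e1 : cls v = b0 := (Finset.mem_filter.mp hv).2
      have e2 : cls v' = b0 := (Finset.mem_filter.mp hv').2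
      have e3 := congrFun (e1.trans e2.symm) j
      simpa [hclsdef] using e3
    have hjval : (v j).val ≠ (v' j).val := fun h => hj (Fin.ext h)
    have hsepj : (σ:ℝ) ≤ |((v j : ℕ):ℝ) - ((v' j : ℕ):ℝ)| := by
      rcases Nat.lt_or_ge (v j).val (v' j).val with hlt | hge
      · have h1 := mod_sep hmod hlt
        have h2 : ((v j : ℕ):ℝ) + σ ≤ ((v' j : ℕ):ℝ) := by exact_mod_cast h1
        rw [abs_sub_comm]
        rw [le_abs]
        left
        linarith
      · have hlt : (v' j).val < (v j).val := by omega
        have h1 := mod_sep hmod.symm hlt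
        have h2 : ((v' j : ℕ):ℝ) + σ ≤ ((v j : ℕ):ℝ) := by exact_mod_cast h1
        rw [le_abs]
        left
        linarith
    have hcj : |uf v hv j - uf v' hv' j| = |((v j : ℕ):ℝ) - ((v' j : ℕ):ℝ)| := by
      rw [hucoord v hv j hji0, hucoord v' hv' j hji0, add_sub_add_left_eq_sub]
    have huu : (σ:ℝ) ≤ dist (uf v hv) (uf v' hv') := by
      refine le_trans ?_ (coord_le_dist (uf v hv) (uf v' hv') j)
      rw [hcj]
      exact hsepj
    have htri : dist (uf v hv) (uf v' hv') ≤
        dist (uf v hv) (zf v hv) + dist (zf v hv) (zf v' hv') + dist (zf v' hv') (uf v' hv') :=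
      dist_triangle4 _ _ _ _
    have d1 := hdzf v hv
    have d2 := hdzf v' hv'
    rw [dist_comm (zf v' hv')] at htri
    linarith
  -- assemble the point set
  set F2 : {x // x ∈ W} → EuclideanSpace ℝ (Fin n) := fun v => zf v.1 v.2 with hF2def
  obtain ⟨v0, hv0⟩ := Finset.card_pos.mp hWpos
  set s0 := zf v0 hv0 with hs0def
  set Pfin := W.attach.image F2 with hPfindef
  have hinj : Set.InjOn F2 W.attach := by
    intro x _ y _ hxy
    by_contra hne'
    have hvv : x.1 ≠ y.1 := fun h => hne' (Subtype.ext h)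
    have h1 := hdistlow x.1 x.2 y.1 y.2 hvv
    have h2 : dist (F2 x) (F2 y) = 0 := by rw [hxy, dist_self]
    rw [hF2def] at h2
    simp only [] at h2
    linarith [h1, h2.le, h2.ge]
  have hcardPfin : Pfin.card = W.card := by
    rw [hPfindef, Finset.card_image_of_injOn hinj, Finset.card_attach]
  have hup_r : 2*L + (n:ℝ)*m ≤ r := by nlinarith
  have hsvol : Pfin.card ≤ svol (1/5) (Metric.closedBall s0 r ∩ Z) := by
    apply svol_lower_bound
    · intro x hx
      obtain ⟨vx, _, rfl⟩ := Finset.mem_image.mp hx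
      constructor
      · rw [Metric.mem_closedBall]
        calc dist (F2 vx) s0 ≤ 2*L + (n:ℝ)*m := hdistup vx.1 vx.2 v0 hv0
        _ ≤ r := hup_r
      · exact hzfZ vx.1 vx.2
    · intro x hx y hy hxy
      obtain ⟨vx, _, rfl⟩ := Finset.mem_image.mp hx
      obtain ⟨vy, _, rfl⟩ := Finset.mem_image.mp hy
      have hvv : vx.1 ≠ vy.1 := by
        intro h
        exact hxy (congrArg F2 (Subtype.ext h))
      exact hdistlow vx.1 vx.2 vy.1 vy.2 hvv
  refine ⟨Z, hZS, s0, hzfZ v0 hv0, ?_⟩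
  have hWR : ((m:ℕ):ℝ)^(n-1) ≤ 9*(n:ℝ)*(σ:ℝ)^n*(W.card:ℝ) := by exact_mod_cast hcount
  have hsvolR : (W.card : ℝ) ≤ (svol (1/5) (Metric.closedBall s0 r ∩ Z) : ℝ) := by
    rw [← hcardPfin]
    exact_mod_cast hsvol
  have e1 : (1/Kc) * r^(n-1) ≤ (1/Kc) * ((4*(n:ℝ)*(m:ℝ)))^(n-1) :=
    mul_le_mul_of_nonneg_left (pow_le_pow_left₀ (le_of_lt hrpos) hrm _) (by positivity)
  have e2 : ((4*(n:ℝ)*(m:ℝ)))^(n-1) = (4*(n:ℝ))^(n-1) * ((m:ℕ):ℝ)^(n-1) := mul_pow _ _ _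
  have e3 : (4*(n:ℝ))^(n-1) * ((m:ℕ):ℝ)^(n-1)
      ≤ (4*(n:ℝ))^(n-1) * (9*(n:ℝ)*(σ:ℝ)^n*(W.card:ℝ)) :=
    mul_le_mul_of_nonneg_left hWR (by positivity)
  have e4 : (1/Kc) * ((4*(n:ℝ))^(n-1) * (9*(n:ℝ)*(σ:ℝ)^n*(W.card:ℝ))) = (W.card:ℝ) := by
    rw [hKc]
    field_simp
  have e5 : (1/Kc) * r^(n-1) ≤ (W.card:ℝ) := by
    rw [← e4]
    refine le_trans e1 ?_
    rw [e2]
    exact mul_le_mul_of_nonneg_left e3 (by positivity)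
  exact le_trans e5 hsvolR
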